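/- arXiv:1807.02266 — 5 statements merged into one kernel-verified Lean document; each statement's English description precedes it below -/
import Mathlib

section
/- Let W be an n'-dimensional real inner product space and let E and F be linear subspaces of W with dim E = p and dim F = k. Set m := min{k, n'−k, p, n'−p}. Then there exist an orthonormal basis e_1, …, e_p of E, an orthonormal basis f_1, …, f_k of F, and real angles π/2 ≥ θ_1 ≥ θ_2 ≥ … ≥ θ_m ≥ 0 such that: (1) ⟨e_i, f_j⟩ = 0 for all i ≠ j; (2) ⟨e_i, f_i⟩ = cos θ_i for 1 ≤ i ≤ m; (3) ⟨e_i, f_i⟩ = 1 for m+1 ≤ i ≤ min{k, p}. -/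
open Real

/-- `m = min {k, n'-k, p, n'-p}`, the number of Jordan angles between a `p`-dimensional
and a `k`-dimensional subspace of an `n'`-dimensional euclidean space. -/
abbrev jordanDim (n' p k : ℕ) : ℕ := min (min k (n' - k)) (min p (n' - p))

/-- A Jordan system for the pair of subspaces `(E, F)`: orthonormal bases `e` of `E` and
`f` of `F` together with nonincreasing angles `θ` in `[0, π/2]` such that
`⟪e i, f j⟫ = 0` for `i ≠ j`, `⟪e i, f i⟫ = cos (θ i)` for `i < m`, and
`⟪e i, f i⟫ = 1` for `m ≤ i < min k p`. -/
def IsJordanSystem {W : Type*} [NormedAddCommGroup W] [InnerProductSpace ℝ W]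
    (n' p k : ℕ) (E F : Submodule ℝ W)
    (e : Fin p → W) (f : Fin k → W) (θ : Fin (jordanDim n' p k) → ℝ) : Prop :=
  Orthonormal ℝ e ∧ Submodule.span ℝ (Set.range e) = E ∧
  Orthonormal ℝ f ∧ Submodule.span ℝ (Set.range f) = F ∧
  (∀ i, 0 ≤ θ i ∧ θ i ≤ π / 2) ∧
  (∀ i j, i ≤ j → θ j ≤ θ i) ∧
  (∀ (i : Fin p) (j : Fin k), (i : ℕ) ≠ (j : ℕ) → inner ℝ (e i) (f j) = (0 : ℝ)) ∧
  (∀ i : Fin (jordanDim n' p k),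
    inner ℝ (e ⟨i, i.isLt.trans_le ((min_le_right _ _).trans (min_le_left _ _))⟩)
          (f ⟨i, i.isLt.trans_le ((min_le_left _ _).trans (min_le_left _ _))⟩)
      = Real.cos (θ i)) ∧
  (∀ (i : ℕ) (hip : i < p) (hik : i < k), jordanDim n' p k ≤ i →
    inner ℝ (e ⟨i, hip⟩) (f ⟨i, hik⟩) = (1 : ℝ))

/-!
The cosines of the Jordan angles are the singular values of the orthogonal projection
`A : E → F`. An orthonormal eigenbasis `e` of `A† A`, ordered by increasing eigenvalue, has
pairwise orthogonal images `A eᵢ`; normalizing the nonzero ones and completing them gives `f`,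
so that `⟪eᵢ, fⱼ⟫ = ‖A eᵢ‖ δᵢⱼ`. If `‖A eᵢ‖ < 1`, the projections of `e₀, …, eᵢ` onto `Fᗮ` are
nonzero and pairwise orthogonal, so `i < n' - k`: the last cosines are `1`. This settles
`p ≤ k`, and exchanging `E` and `F` settles `k ≤ p`.
-/

open Module InnerProductSpace

namespace LinearMap

variable {𝕜 V U : Type*} [RCLike 𝕜]
  [NormedAddCommGroup V] [InnerProductSpace 𝕜 V] [FiniteDimensional 𝕜 V]
  [NormedAddCommGroup U] [InnerProductSpace 𝕜 U] [FiniteDimensional 𝕜 U]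

theorem exists_orthonormalBasis_apply_eq_norm_smul (A : V →ₗ[𝕜] U) {p k : ℕ}
    (hp : finrank 𝕜 V = p) (hk : finrank 𝕜 U = k) (hpk : p ≤ k) :
    ∃ (e : OrthonormalBasis (Fin p) 𝕜 V) (f : OrthonormalBasis (Fin k) 𝕜 U),
      Monotone (fun i => ‖A (e i)‖) ∧ ∀ i, A (e i) = (‖A (e i)‖ : 𝕜) • f (Fin.castLE hpk i) := by
  have hT := A.isSymmetric_adjoint_comp_self
  let e := (hT.eigenvectorBasis hp).reindex Fin.revPerm
  have inner_apply (i j : Fin p) :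
      ⟪A (e i), A (e j)⟫_𝕜 = if i = j then (hT.eigenvalues hp i.rev : 𝕜) else 0 := by
    rw [← adjoint_inner_left, ← comp_apply]
    simp [e, inner_smul_left, orthonormal_iff_ite.mp (hT.eigenvectorBasis hp).orthonormal]
  have norm_sq (i : Fin p) : ‖A (e i)‖ ^ 2 = hT.eigenvalues hp i.rev := by
    have := inner_apply i i
    rw [if_pos rfl, inner_self_eq_norm_sq_to_K] at this
    exact_mod_cast this
  let w : Fin k → U := fun j => if h : (j : ℕ) < p then A (e ⟨j, h⟩) else 0
  have hw : Pairwise fun i j => ⟪w i, w j⟫_𝕜 = 0 := by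
    intro i j hij
    simp only [w]
    split_ifs with hi hj
    · simp [inner_apply, Fin.ext_iff, Fin.val_ne_of_ne hij]
    all_goals simp
  -- Gram–Schmidt only normalizes the nonzero vectors of the orthogonal family `w`.
  let f := gramSchmidtOrthonormalBasis (by rw [hk, Fintype.card_fin]) w
  refine ⟨e, f, fun i j hij => ?_, fun i => ?_⟩
  · rw [← sq_le_sq₀ (norm_nonneg _) (norm_nonneg _), norm_sq, norm_sq]
    exact hT.eigenvalues_antitone hp (Fin.rev_le_rev.mpr hij)
  · by_cases h0 : A (e i) = 0
    · simp [h0]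
    have hwi : w (Fin.castLE hpk i) = A (e i) := dif_pos i.isLt
    rw [gramSchmidtOrthonormalBasis_apply_of_orthogonal _ hw (hwi ▸ h0), hwi, smul_smul,
      mul_inv_cancel₀ (by simpa using h0), one_smul]

end LinearMap

namespace Submodule

variable {𝕜 W : Type*} [RCLike 𝕜] [NormedAddCommGroup W] [InnerProductSpace 𝕜 W]

theorem inner_orthogonalProjectionOnto_orthogonal (K : Submodule 𝕜 W)
    [K.HasOrthogonalProjection] (x y : W) :
    ⟪Kᗮ.orthogonalProjectionOnto x, Kᗮ.orthogonalProjectionOnto y⟫_𝕜 =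
      ⟪x, y⟫_𝕜 - ⟪K.orthogonalProjectionOnto x, K.orthogonalProjectionOnto y⟫_𝕜 := by
  rw [inner_orthogonalProjectionOnto_eq_of_mem_left, inner_orthogonalProjectionOnto_eq_of_mem_left,
    ← starProjection_apply, ← starProjection_apply, starProjection_orthogonal_val, inner_sub_left]

theorem card_le_finrank_orthogonal [FiniteDimensional 𝕜 W] (K : Submodule 𝕜 W)
    {ι : Type*} [Fintype ι] {v : ι → W} (hv : Orthonormal 𝕜 v)
    (hK : Pairwise fun i j =>
      ⟪K.orthogonalProjectionOnto (v i), K.orthogonalProjectionOnto (v j)⟫_𝕜 = 0)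
    (hlt : ∀ i, ‖K.orthogonalProjectionOnto (v i)‖ < 1) :
    Fintype.card ι ≤ finrank 𝕜 Kᗮ := by
  refine LinearIndependent.fintype_card_le_finrank <|
    linearIndependent_of_ne_zero_of_inner_eq_zero
      (v := fun i => Kᗮ.orthogonalProjectionOnto (v i)) (fun i h => ?_) (fun i j hij => ?_)
  · have pythagoras := K.norm_sq_eq_add_norm_sq_projection (v i)
    rw [hv.1 i, h, norm_zero] at pythagoras
    nlinarith [hlt i, norm_nonneg (K.orthogonalProjectionOnto (v i))]
  · beta_reduce
    rw [inner_orthogonalProjectionOnto_orthogonal, hK hij, hv.2 hij, sub_zero]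

end Submodule

theorem Module.Basis.span_range_coe {ι R M : Type*} [Semiring R] [AddCommMonoid M] [Module R M]
    {K : Submodule R M} (b : Basis ι R K) :
    Submodule.span R (Set.range fun i => (b i : M)) = K := by
  rw [Set.range_comp' Subtype.val b, ← K.coe_subtype, Submodule.span_image, b.span_eq,
    Submodule.map_subtype_top]

theorem jordanDim_comm (n' p k : ℕ) : jordanDim n' p k = jordanDim n' k p := min_comm _ _

section JordanSystem

variable {W : Type*} [NormedAddCommGroup W] [InnerProductSpace ℝ W]

theorem IsJordanSystem.symm {n' p k : ℕ} {E F : Submodule ℝ W} {e : Fin p → W} {f : Fin k → W}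
    {θ : Fin (jordanDim n' p k) → ℝ} (h : IsJordanSystem n' p k E F e f θ) :
    IsJordanSystem n' k p F E f e (θ ∘ Fin.cast (jordanDim_comm n' k p)) := by
  obtain ⟨he, hE, hf, hF, hθ, hanti, hcross, hdiag, hone⟩ := h
  refine ⟨hf, hF, he, hE, fun i => hθ _, fun i j hij => hanti _ _ hij, fun i j hij => ?_,
    fun i => ?_, fun i hik hip hm => ?_⟩
  · rw [real_inner_comm]; exact hcross j i (Ne.symm hij)
  · rw [real_inner_comm]; exact hdiag (Fin.cast _ i)
  · rw [real_inner_comm]; exact hone i hip hik ((jordanDim_comm n' p k).trans_le hm)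

theorem exists_isJordanSystem_of_le [FiniteDimensional ℝ W] {n' p k : ℕ} (E F : Submodule ℝ W)
    (hW : finrank ℝ W = n') (hE : finrank ℝ E = p) (hF : finrank ℝ F = k) (hpk : p ≤ k) :
    ∃ e f θ, IsJordanSystem n' p k E F e f θ := by
  let A : E →ₗ[ℝ] F := F.orthogonalProjectionOnto.toLinearMap ∘ₗ E.subtype
  obtain ⟨e, f, hmono, hAe⟩ := A.exists_orthonormalBasis_apply_eq_norm_smul hE hF hpk
  have inner_eq (i : Fin p) (j : Fin k) :
      ⟪(e i : W), (f j : W)⟫_ℝ = if (i : ℕ) = j then ‖A (e i)‖ else 0 := by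
    rw [← F.inner_orthogonalProjectionOnto_eq_of_mem_right (f j) (e i)]
    change ⟪A (e i), f j⟫_ℝ = _
    conv_lhs => rw [hAe]
    rw [real_inner_smul_left, orthonormal_iff_ite.mp f.orthonormal]
    simp [Fin.ext_iff]
  have norm_le_one (i : Fin p) : ‖A (e i)‖ ≤ 1 :=
    (F.norm_orthogonalProjectionOnto_apply_le _).trans_eq (e.orthonormal.1 i)
  have norm_eq_one (i : Fin p) (hi : n' - k ≤ i) : ‖A (e i)‖ = 1 := by
    by_contra hne
    have hlt (l : Fin (i + 1)) : ‖A (e (Fin.castLE i.isLt l))‖ < 1 :=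
      (hmono (show Fin.castLE _ l ≤ i from Nat.lt_succ_iff.mp l.isLt)).trans_lt
        ((norm_le_one i).lt_of_ne hne)
    have horth : Pairwise fun l m : Fin (i + 1) =>
        ⟪A (e (Fin.castLE i.isLt l)), A (e (Fin.castLE i.isLt m))⟫_ℝ = 0 := by
      intro l m hlm
      rw [hAe (Fin.castLE _ l), hAe (Fin.castLE _ m), real_inner_smul_left,
        real_inner_smul_right,
        f.orthonormal.2 ((Fin.castLE_injective _).ne ((Fin.castLE_injective _).ne hlm))]
      simp
    have hcard := F.card_le_finrank_orthogonal
      ((e.orthonormal.comp_linearIsometry E.subtypeₗᵢ).comp _ (Fin.castLE_injective i.isLt))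
      horth hlt
    have := F.finrank_add_finrank_orthogonal
    rw [Fintype.card_fin] at hcard
    omega
  refine ⟨fun i => e i, fun j => f j,
    fun i => arccos ‖A (e ⟨i, i.isLt.trans_le ((min_le_right _ _).trans (min_le_left _ _))⟩)‖,
    e.orthonormal.comp_linearIsometry E.subtypeₗᵢ, e.toBasis.span_range_coe,
    f.orthonormal.comp_linearIsometry F.subtypeₗᵢ, f.toBasis.span_range_coe,
    fun i => ⟨arccos_nonneg _, arccos_le_pi_div_two.mpr (norm_nonneg _)⟩,
    fun i j hij => arccos_le_arccos (hmono hij), fun i j hij => by rw [inner_eq, if_neg hij],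
    fun i => ?_, fun i hip hik hm => ?_⟩
  · rw [inner_eq, if_pos rfl, cos_arccos (neg_one_lt_zero.trans_le (norm_nonneg _)).le
      (norm_le_one _)]
  · unfold jordanDim at hm
    rw [inner_eq, if_pos rfl, norm_eq_one ⟨i, hip⟩ (show n' - k ≤ i by omega)]

end JordanSystem

/-- Existence of Jordan angles (Lemma on orbits of pairs of subspaces): for any subspaces
`E`, `F` of dimensions `p`, `k` of an `n'`-dimensional real inner product space there are
orthonormal bases of `E` and `F` and angles `π/2 ≥ θ_1 ≥ … ≥ θ_m ≥ 0` forming a Jordan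
system. -/
theorem jordan_angles_exist
    {W : Type*} [NormedAddCommGroup W] [InnerProductSpace ℝ W] [FiniteDimensional ℝ W]
    (n' p k : ℕ) (hW : Module.finrank ℝ W = n')
    (E F : Submodule ℝ W)
    (hE : Module.finrank ℝ E = p) (hF : Module.finrank ℝ F = k) :
    ∃ (e : Fin p → W) (f : Fin k → W) (θ : Fin (jordanDim n' p k) → ℝ),
      IsJordanSystem n' p k E F e f θ := by
  rcases le_total p k with hpk | hkp
  · exact exists_isJordanSystem_of_le E F hW hE hF hpk
  · obtain ⟨f, e, θ, hJ⟩ := exists_isJordanSystem_of_le F E hW hF hE hkp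
    exact ⟨e, f, _, hJ.symm⟩
end

section
/- Let W be an n'-dimensional real inner product space and let E, F be subspaces with dim E = p, dim F = k, and m := min{k, n'−k, p, n'−p}. Suppose (e_1,…,e_p; f_1,…,f_k; θ_1 ≥ … ≥ θ_m) and (ẽ_1,…,ẽ_p; f̃_1,…,f̃_k; θ̃_1 ≥ … ≥ θ̃_m) are both Jordan systems for (E, F), where the angles lie in [0, π/2] and are nonincreasing. Then θ_i = θ̃_i for all 1 ≤ i ≤ m. In other words, the Jordan angles of a pair of subspaces are unique. -/
open Real

/-!
The squared cosines `⟪e i, f i⟫²`, padded with zeros up to `p`, are the eigenvalues of the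
compression `P_E P_F : E → E`, with eigenvectors `e i`; so their multiset is the multiset of roots
of its characteristic polynomial and depends on `E` and `F` only. Cancelling the `p - min k p`
padding zeros, the multiset of squared cosines `⟪e i, f i⟫²`, `i < min k p`, is an invariant of
`(E, F)`. This sequence is nondecreasing (`cos²` decreases on `[0, π/2]`, the angles decrease, and
the remaining entries are `1`), so it is the sorted list of that multiset, and `cos²` is injective
on `[0, π/2]`.
-/

open Polynomial in
theorem LinearMap.roots_charpoly_of_apply_basis {R M ι : Type*} [CommRing R] [IsDomain R]
    [AddCommGroup M] [Module R M] [Module.Free R M] [Module.Finite R M]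
    [Fintype ι] [DecidableEq ι] (S : M →ₗ[R] M) (b : Module.Basis ι R M) (μ : ι → R)
    (hS : ∀ i, S (b i) = μ i • b i) :
    S.charpoly.roots = Finset.univ.val.map μ := by
  have hdiag : S.toMatrix b b = Matrix.diagonal μ := by
    ext i j
    simp only [LinearMap.toMatrix_apply, hS, map_smul, Module.Basis.repr_self, Finsupp.smul_single,
      Finsupp.single_apply, Matrix.diagonal_apply, smul_eq_mul, mul_one]
    grind
  rw [← S.charpoly_toMatrix b, hdiag, Matrix.charpoly_diagonal, roots_prod _ _
    (Finset.prod_ne_zero_iff.2 fun i _ => X_sub_C_ne_zero (μ i))]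
  simp

theorem Fin.univ_val_map_dite_lt {α : Type*} {N p : ℕ} (h : N ≤ p) (g : Fin N → α) (z : α) :
    Finset.univ.val.map (fun i : Fin p => if hi : (i : ℕ) < N then g ⟨i, hi⟩ else z) =
      Finset.univ.val.map g + Multiset.replicate (p - N) z := by
  obtain ⟨r, rfl⟩ := Nat.exists_eq_add_of_le h
  simp [Fin.univ_val_map, List.ofFn_add, ← Multiset.coe_add, Multiset.coe_replicate]

theorem Fin.eq_of_monotone_of_univ_val_map_eq {α : Type*} [LinearOrder α] {n : ℕ}
    {g g' : Fin n → α} (hg : Monotone g) (hg' : Monotone g')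
    (h : Finset.univ.val.map g = Finset.univ.val.map g') : g = g' := by
  rw [Fin.univ_val_map, Fin.univ_val_map, Multiset.coe_eq_coe] at h
  exact List.ofFn_injective (h.eq_of_sortedLE hg.sortedLE_ofFn hg'.sortedLE_ofFn)

theorem Real.strictAntiOn_cos_sq : StrictAntiOn (fun θ => cos θ ^ 2) (Set.Icc 0 (π / 2)) := by
  intro a ha b hb hab
  have hb0 : 0 ≤ cos b := cos_nonneg_of_mem_Icc ⟨by linarith [hb.1, pi_pos], hb.2⟩
  have := strictAntiOn_cos ⟨ha.1, by linarith [ha.2, pi_pos]⟩ ⟨hb.1, by linarith [hb.2, pi_pos]⟩ hab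
  exact pow_lt_pow_left₀ this hb0 two_ne_zero

open scoped RealInnerProductSpace

section

variable {W : Type*} [NormedAddCommGroup W] [InnerProductSpace ℝ W]

theorem Orthonormal.starProjection_eq_sum {ι : Type*} [DecidableEq ι] {v : ι → W}
    (hv : Orthonormal ℝ v) {K : Submodule ℝ W} [K.HasOrthogonalProjection]
    (hK : Submodule.span ℝ (Set.range v) = K) {x : W} (s : Finset ι)
    (hx : ∀ i ∉ s, ⟪v i, x⟫ = 0) :
    K.starProjection x = ∑ i ∈ s, ⟪v i, x⟫ • v i := by
  refine K.eq_starProjection_of_mem_orthogonal ?_ ?_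
  · exact Submodule.sum_mem _ fun i _ =>
      Submodule.smul_mem _ _ (hK ▸ Submodule.subset_span (Set.mem_range_self i))
  · have : Submodule.span ℝ {x - ∑ i ∈ s, ⟪v i, x⟫ • v i} ⟂ K := by
      rw [← hK, Submodule.isOrtho_span]
      rintro _ rfl _ ⟨j, rfl⟩
      rw [real_inner_comm, inner_sub_right, inner_sum]
      simp only [inner_smul_right, orthonormal_iff_ite.1 hv]
      by_cases hj : j ∈ s <;> simp [hj, hx]
    exact this.le (Submodule.mem_span_singleton_self _)

theorem Orthonormal.starProjection_eq_inner_smul {ι : Type*} {v : ι → W}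
    (hv : Orthonormal ℝ v) {K : Submodule ℝ W} [K.HasOrthogonalProjection]
    (hK : Submodule.span ℝ (Set.range v) = K) {x : W} {i₀ : ι}
    (hx : ∀ i ≠ i₀, ⟪v i, x⟫ = 0) :
    K.starProjection x = ⟪v i₀, x⟫ • v i₀ := by
  classical
  simpa using hv.starProjection_eq_sum hK {i₀} (by simpa using hx)

theorem Orthonormal.starProjection_eq_zero {ι : Type*} {v : ι → W}
    (hv : Orthonormal ℝ v) {K : Submodule ℝ W} [K.HasOrthogonalProjection]
    (hK : Submodule.span ℝ (Set.range v) = K) {x : W} (hx : ∀ i, ⟪v i, x⟫ = 0) :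
    K.starProjection x = 0 := by
  classical
  simpa using hv.starProjection_eq_sum hK ∅ (by simpa using hx)

noncomputable def projCompression (E F : Submodule ℝ W) [E.HasOrthogonalProjection]
    [F.HasOrthogonalProjection] : E →ₗ[ℝ] E :=
  E.orthogonalProjectionOnto.toLinearMap ∘ₗ F.starProjection.toLinearMap ∘ₗ E.subtype

def diagInner {p k : ℕ} (e : Fin p → W) (f : Fin k → W) (i : Fin (min k p)) : ℝ :=
  ⟪e (Fin.castLE (min_le_right k p) i), f (Fin.castLE (min_le_left k p) i)⟫

theorem jordanDim_le_min (n' p k : ℕ) : jordanDim n' p k ≤ min k p :=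
  le_min ((min_le_left _ _).trans (min_le_left _ _)) ((min_le_right _ _).trans (min_le_left _ _))

namespace IsJordanSystem

variable {n' p k : ℕ} {E F : Submodule ℝ W} {e : Fin p → W} {f : Fin k → W}
  {θ : Fin (jordanDim n' p k) → ℝ}

theorem diagInner_eq_cos (h : IsJordanSystem n' p k E F e f θ) (i : Fin (jordanDim n' p k)) :
    diagInner e f (Fin.castLE (jordanDim_le_min n' p k) i) = cos (θ i) :=
  h.2.2.2.2.2.2.2.1 i

theorem diagInner_eq_one (h : IsJordanSystem n' p k E F e f θ) (i : Fin (min k p))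
    (hi : jordanDim n' p k ≤ i) : diagInner e f i = 1 :=
  h.2.2.2.2.2.2.2.2 i _ _ hi

theorem mem_Icc (h : IsJordanSystem n' p k E F e f θ) (i : Fin (jordanDim n' p k)) :
    θ i ∈ Set.Icc 0 (π / 2) :=
  h.2.2.2.2.1 i

theorem antitone (h : IsJordanSystem n' p k E F e f θ) : Antitone θ :=
  h.2.2.2.2.2.1

theorem monotone_diagInner_sq (h : IsJordanSystem n' p k E F e f θ) :
    Monotone (diagInner e f ^ 2) := by
  have hval : ∀ i : Fin (min k p), (diagInner e f ^ 2) i =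
      if hi : (i : ℕ) < jordanDim n' p k then cos (θ ⟨i, hi⟩) ^ 2 else 1 := by
    intro i
    split_ifs with hi
    · exact congrArg (· ^ 2) (h.diagInner_eq_cos ⟨i, hi⟩)
    · simp [h.diagInner_eq_one i (not_lt.1 hi)]
  intro a b hab
  rw [hval, hval]
  by_cases hb : (b : ℕ) < jordanDim n' p k
  · have ha : (a : ℕ) < jordanDim n' p k := lt_of_le_of_lt hab hb
    rw [dif_pos ha, dif_pos hb]
    exact strictAntiOn_cos_sq.antitoneOn (h.mem_Icc _) (h.mem_Icc _) (h.antitone hab)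
  · rw [dif_neg hb]
    split_ifs
    · exact cos_sq_le_one _
    · exact le_rfl

theorem starProjection_starProjection_apply [E.HasOrthogonalProjection]
    [F.HasOrthogonalProjection] (h : IsJordanSystem n' p k E F e f θ) (i : Fin p) :
    E.starProjection (F.starProjection (e i)) =
      (if hi : (i : ℕ) < min k p then diagInner e f ⟨i, hi⟩ ^ 2 else 0) • e i := by
  obtain ⟨he, hE, hf, hF, -, -, horth, -⟩ := h
  split_ifs with hi
  · set j : Fin k := ⟨i, lt_of_lt_of_le hi (min_le_left k p)⟩
    have hPF : F.starProjection (e i) = ⟪f j, e i⟫ • f j :=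
      hf.starProjection_eq_inner_smul hF fun j' hj' => by
        rw [real_inner_comm]
        exact horth i j' fun hij => hj' (Fin.ext hij.symm)
    have hPE : E.starProjection (f j) = ⟪e i, f j⟫ • e i :=
      he.starProjection_eq_inner_smul hE fun i' hi' => horth i' j fun hij => hi' (Fin.ext hij)
    rw [hPF, map_smul, hPE, smul_smul, real_inner_comm, ← sq]
    rfl
  · rw [hf.starProjection_eq_zero hF fun j => by
      rw [real_inner_comm]; exact horth i j fun hij => hi (by omega), map_zero, zero_smul]

theorem roots_charpoly_projCompression [FiniteDimensional ℝ W]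
    (h : IsJordanSystem n' p k E F e f θ) :
    (projCompression E F).charpoly.roots =
      Finset.univ.val.map (diagInner e f ^ 2) + Multiset.replicate (p - min k p) 0 := by
  let b : Module.Basis (Fin p) ℝ E :=
    (Module.Basis.span h.1.linearIndependent).map (LinearEquiv.ofEq _ _ h.2.1)
  have hb : ∀ i, (b i : W) = e i := by simp [b]
  rw [(projCompression E F).roots_charpoly_of_apply_basis b _ fun i => Subtype.ext ?_,
    ← Fin.univ_val_map_dite_lt (min_le_right k p)]
  rw [Submodule.coe_smul, hb]
  exact hb i ▸ h.starProjection_starProjection_apply i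

end IsJordanSystem

end

theorem jordan_angles_unique_general
    {W : Type*} [NormedAddCommGroup W] [InnerProductSpace ℝ W] [FiniteDimensional ℝ W]
    (n' p k : ℕ)
    (E F : Submodule ℝ W)
    (e e' : Fin p → W) (f f' : Fin k → W)
    (θ θ' : Fin (jordanDim n' p k) → ℝ)
    (h1 : IsJordanSystem n' p k E F e f θ)
    (h2 : IsJordanSystem n' p k E F e' f' θ') :
    ∀ i, θ i = θ' i := by
  intro i
  have hsq : diagInner e f ^ 2 = diagInner e' f' ^ 2 :=
    Fin.eq_of_monotone_of_univ_val_map_eq h1.monotone_diagInner_sq h2.monotone_diagInner_sq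
      (add_right_cancel (h1.roots_charpoly_projCompression.symm.trans
        h2.roots_charpoly_projCompression))
  have hcos := congrFun hsq (Fin.castLE (jordanDim_le_min n' p k) i)
  simp only [Pi.pow_apply, h1.diagInner_eq_cos, h2.diagInner_eq_cos] at hcos
  exact strictAntiOn_cos_sq.injOn (h1.mem_Icc i) (h2.mem_Icc i) hcos

/-- Uniqueness of Jordan angles: any two Jordan systems for the same pair of subspaces
`(E, F)` have the same (nonincreasing) sequence of angles. -/
theorem jordan_angles_unique
    {W : Type*} [NormedAddCommGroup W] [InnerProductSpace ℝ W] [FiniteDimensional ℝ W]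
    (n' p k : ℕ) (hW : Module.finrank ℝ W = n')
    (E F : Submodule ℝ W)
    (hE : Module.finrank ℝ E = p) (hF : Module.finrank ℝ F = k)
    (e e' : Fin p → W) (f f' : Fin k → W)
    (θ θ' : Fin (jordanDim n' p k) → ℝ)
    (h1 : IsJordanSystem n' p k E F e f θ)
    (h2 : IsJordanSystem n' p k E F e' f' θ') :
    ∀ i, θ i = θ' i :=
  jordan_angles_unique_general n' p k E F e e' f f' θ θ' h1 h2
end

section
/- Let W be an n'-dimensional real inner product space and let E, F be subspaces with dim E = p, dim F = k and m := min{k, n'−k, p, n'−p}. Let (e; f; θ_1 ≥ … ≥ θ_m) be a Jordan system for (E, F) with angles in [0, π/2], and let ℓ be the number of indices i ∈ {1,…,m} with θ_i ≠ 0 (equivalently, the largest index ℓ with θ_ℓ ≠ 0). Then dim(E + F) = max{k, p} + ℓ. -/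
open Real

/-!
By Grassmann's formula `dim (E + F) = p + k - dim (E ∩ F)`. A vector `v ∈ E ∩ F` has
coordinates `a i = ⟪e i, v⟫` and `b j = ⟪f j, v⟫`; since `e i` only meets `f i`, expanding `v`
in each basis gives `a i = cos θ i * b i` and `b i = cos θ i * a i` (reading `θ i = 0` for
`m ≤ i < min k p`). So `a i` vanishes unless `θ i = 0`, and it vanishes for `i ≥ k`, where
`e i ⟂ F`. Hence `E ∩ F` is spanned by the
`e i = f i` with `i < min k p` and zero angle, and there are `min k p - ℓ` of them.
-/

open Submodule Set
open scoped RealInnerProductSpace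

section Orthonormal

variable {W ι κ : Type*} [NormedAddCommGroup W] [InnerProductSpace ℝ W]

theorem inner_eq_zero_of_mem_span {f : κ → W} {x v : W} (hx : ∀ j, ⟪x, f j⟫ = 0)
    (hv : v ∈ span ℝ (range f)) : ⟪x, v⟫ = 0 := by
  have hortho : span ℝ {x} ⟂ span ℝ (range f) := by
    rw [isOrtho_span]
    rintro _ rfl _ ⟨j, rfl⟩
    exact hx j
  exact hortho.inner_eq (mem_span_singleton_self x) hv

theorem Orthonormal.inner_eq_mul_inner_of_mem_span {f : κ → W} (hf : Orthonormal ℝ f)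
    {x v : W} {j₀ : κ} (hx : ∀ j ≠ j₀, ⟪x, f j⟫ = 0) (hv : v ∈ span ℝ (range f)) :
    ⟪x, v⟫ = ⟪x, f j₀⟫ * ⟪f j₀, v⟫ := by
  have hproj : ∀ j, ⟪x - ⟪x, f j₀⟫ • f j₀, f j⟫ = 0 := by
    intro j
    rcases eq_or_ne j j₀ with rfl | hj
    · simp [inner_sub_left, real_inner_smul_left, hf.1 j]
    · simp [inner_sub_left, real_inner_smul_left, hx j hj, hf.2 hj.symm]
  have := inner_eq_zero_of_mem_span hproj hv
  rw [inner_sub_left, real_inner_smul_left] at this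
  linarith

theorem Orthonormal.inner_eq_zero_of_mem_span_inf {e : ι → W} {f : κ → W}
    (he : Orthonormal ℝ e) (hf : Orthonormal ℝ f) {i₀ : ι} {j₀ : κ}
    (hi : ∀ i ≠ i₀, ⟪e i, f j₀⟫ = 0) (hj : ∀ j ≠ j₀, ⟪e i₀, f j⟫ = 0)
    (hc : |⟪e i₀, f j₀⟫| < 1) {v : W} (hv : v ∈ span ℝ (range e) ⊓ span ℝ (range f)) :
    ⟪e i₀, v⟫ = 0 := by
  have hef := hf.inner_eq_mul_inner_of_mem_span hj hv.2
  have hfe := he.inner_eq_mul_inner_of_mem_span (x := f j₀)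
    (fun i hi' => by rw [real_inner_comm]; exact hi i hi') hv.1
  rw [real_inner_comm (e i₀)] at hfe
  have hc2 : ⟪e i₀, f j₀⟫ ^ 2 < 1 := (sq_lt_one_iff_abs_lt_one _).2 hc
  have : ⟪e i₀, v⟫ * (1 - ⟪e i₀, f j₀⟫ ^ 2) = 0 := by
    linear_combination hef + ⟪e i₀, f j₀⟫ * hfe
  exact (mul_eq_zero.1 this).resolve_right (by linarith)

theorem Orthonormal.mem_span_image_of_inner_eq_zero [Fintype ι] {e : ι → W}
    (he : Orthonormal ℝ e) {s : Set ι} {v : W} (hv : v ∈ span ℝ (range e))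
    (hs : ∀ i ∉ s, ⟪e i, v⟫ = 0) : v ∈ span ℝ (e '' s) := by
  obtain ⟨a, rfl⟩ := (mem_span_range_iff_exists_fun ℝ).1 hv
  refine sum_mem fun i _ => ?_
  by_cases hi : i ∈ s
  · exact smul_mem _ _ (subset_span (mem_image_of_mem e hi))
  · rw [← he.inner_right_fintype a i, hs i hi, zero_smul]
    exact zero_mem _

theorem Orthonormal.span_inf_eq_span_image [Fintype ι] {e : ι → W} (he : Orthonormal ℝ e)
    {F : Submodule ℝ W} {s : Set ι} (hs : ∀ i ∈ s, e i ∈ F)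
    (hsc : ∀ i ∉ s, ∀ v ∈ span ℝ (range e) ⊓ F, ⟪e i, v⟫ = 0) :
    span ℝ (range e) ⊓ F = span ℝ (e '' s) := by
  refine le_antisymm
    (fun v hv => he.mem_span_image_of_inner_eq_zero hv.1 fun i hi => hsc i hi v hv) ?_
  rw [span_le]
  rintro _ ⟨i, hi, rfl⟩
  exact ⟨subset_span (mem_range_self i), hs i hi⟩

theorem Orthonormal.finrank_span_image [Finite ι] {e : ι → W} (he : Orthonormal ℝ e)
    (s : Set ι) :
    Module.finrank ℝ (span ℝ (e '' s)) = Nat.card s := by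
  have := Fintype.ofFinite s
  rw [image_eq_range, Nat.card_eq_fintype_card]
  exact finrank_span_eq_card (he.linearIndependent.comp _ Subtype.val_injective)

end Orthonormal

theorem Real.abs_cos_lt_one {θ : ℝ} (h0 : 0 < θ) (h1 : θ ≤ π / 2) : |cos θ| < 1 := by
  have hne : cos θ ≠ 1 := by
    rw [Ne, cos_eq_one_iff_of_lt_of_lt (by linarith [pi_pos]) (by linarith [pi_pos])]
    exact h0.ne'
  rw [abs_lt]
  constructor
  · linarith [cos_nonneg_of_mem_Icc ⟨by linarith [pi_pos], h1⟩]
  · exact lt_of_le_of_ne (cos_le_one θ) hne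

open Finset in
theorem Fin.card_forall_not_add_card_eq_min {m k p : ℕ} (P : Fin m → Prop) (hmk : m ≤ k)
    (hmp : m ≤ p) :
    Nat.card {i : Fin p // (i : ℕ) < k ∧ ∀ h : (i : ℕ) < m, ¬ P ⟨i, h⟩}
      + Nat.card {i : Fin m // P i} = min k p := by
  classical
  set Q : ℕ → Prop := fun n => ∃ h : n < m, P ⟨n, h⟩
  have hnot : Nat.card {i : Fin p // (i : ℕ) < k ∧ ∀ h : (i : ℕ) < m, ¬ P ⟨i, h⟩}
      = #{n ∈ range (min k p) | ¬ Q n} := by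
    rw [Nat.card_eq_fintype_card, Fintype.card_subtype, ← card_map Fin.valEmbedding]
    congr 1
    ext n
    simp only [Q, Finset.mem_map, mem_filter, Finset.mem_univ, true_and, Fin.valEmbedding_apply,
      Finset.mem_range, lt_min_iff, not_exists]
    constructor
    · rintro ⟨a, ⟨hk, hP⟩, rfl⟩
      exact ⟨⟨hk, a.2⟩, hP⟩
    · rintro ⟨⟨hk, hp⟩, hP⟩
      exact ⟨⟨n, hp⟩, ⟨hk, hP⟩, rfl⟩
  have hyes : Nat.card {i : Fin m // P i} = #{n ∈ range (min k p) | Q n} := by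
    rw [Nat.card_eq_fintype_card, Fintype.card_subtype, ← card_map Fin.valEmbedding]
    congr 1
    ext n
    simp only [Q, Finset.mem_map, mem_filter, Finset.mem_univ, true_and, Fin.valEmbedding_apply,
      Finset.mem_range, lt_min_iff]
    constructor
    · rintro ⟨a, hP, rfl⟩
      exact ⟨⟨a.2.trans_le hmk, a.2.trans_le hmp⟩, a.2, hP⟩
    · rintro ⟨-, h, hP⟩
      exact ⟨⟨n, h⟩, hP, rfl⟩
  rw [hnot, hyes, add_comm, card_filter_add_card_filter_not, card_range]

namespace IsJordanSystem

variable {W : Type*} [NormedAddCommGroup W] [InnerProductSpace ℝ W] {n' p k : ℕ}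
  {E F : Submodule ℝ W} {e : Fin p → W} {f : Fin k → W} {θ : Fin (jordanDim n' p k) → ℝ}

theorem inner_eq_cos (hJ : IsJordanSystem n' p k E F e f θ) {i : Fin p} {j : Fin k}
    (hij : (i : ℕ) = j) (hi : (i : ℕ) < jordanDim n' p k) :
    ⟪e i, f j⟫ = cos (θ ⟨i, hi⟩) := by
  obtain ⟨i, hip⟩ := i
  obtain ⟨j, hjk⟩ := j
  obtain rfl : i = j := hij
  exact hJ.2.2.2.2.2.2.2.1 ⟨i, hi⟩

theorem inner_eq_one (hJ : IsJordanSystem n' p k E F e f θ) {i : Fin p} {j : Fin k}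
    (hij : (i : ℕ) = j) (hi : jordanDim n' p k ≤ i) : ⟪e i, f j⟫ = 1 := by
  obtain ⟨i, hip⟩ := i
  obtain ⟨j, hjk⟩ := j
  obtain rfl : i = j := hij
  exact hJ.2.2.2.2.2.2.2.2 i hip hjk hi

theorem mem_of_angle_eq_zero (hJ : IsJordanSystem n' p k E F e f θ) {i : Fin p}
    (hik : (i : ℕ) < k) (hθ : ∀ h : (i : ℕ) < jordanDim n' p k, θ ⟨i, h⟩ = 0) : e i ∈ F := by
  have hinner : ⟪e i, f ⟨i, hik⟩⟫ = 1 := by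
    by_cases hm : (i : ℕ) < jordanDim n' p k
    · rw [hJ.inner_eq_cos rfl hm, hθ hm, cos_zero]
    · exact hJ.inner_eq_one rfl (not_lt.1 hm)
  rw [(inner_eq_one_iff_of_norm_eq_one (hJ.1.1 i) (hJ.2.2.1.1 _)).1 hinner, ← hJ.2.2.2.1]
  exact subset_span (mem_range_self _)

theorem inner_eq_zero_of_mem_inf (hJ : IsJordanSystem n' p k E F e f θ) {i : Fin p}
    (hi : ¬ ((i : ℕ) < k ∧ ∀ h : (i : ℕ) < jordanDim n' p k, θ ⟨i, h⟩ = 0)) {v : W}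
    (hv : v ∈ E ⊓ F) : ⟪e i, v⟫ = 0 := by
  have ⟨he, hE, hf, hF, hθ, _, horth, _⟩ := hJ
  subst hE hF
  by_cases hik : (i : ℕ) < k
  · obtain ⟨hm, hθi⟩ : ∃ h : (i : ℕ) < jordanDim n' p k, θ ⟨i, h⟩ ≠ 0 := by
      by_contra! h
      exact hi ⟨hik, h⟩
    refine he.inner_eq_zero_of_mem_span_inf hf (j₀ := ⟨i, hik⟩)
      (fun i' hi' => horth _ _ fun h => hi' (Fin.ext h))
      (fun j hj => horth _ _ fun h => hj (Fin.ext h.symm)) ?_ hv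
    rw [hJ.inner_eq_cos rfl hm]
    exact Real.abs_cos_lt_one ((hθ _).1.lt_of_ne' hθi) (hθ _).2
  · exact inner_eq_zero_of_mem_span (fun j => horth i j fun h => hik (h ▸ j.2)) hv.2

theorem inf_eq_span (hJ : IsJordanSystem n' p k E F e f θ) :
    E ⊓ F =
      span ℝ (e '' {i | (i : ℕ) < k ∧ ∀ h : (i : ℕ) < jordanDim n' p k, θ ⟨i, h⟩ = 0}) := by
  rw [← hJ.2.1]
  exact hJ.1.span_inf_eq_span_image (fun i hi => hJ.mem_of_angle_eq_zero hi.1 hi.2)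
    fun i hi v hv => hJ.inner_eq_zero_of_mem_inf hi (hJ.2.1 ▸ hv)

end IsJordanSystem

theorem jordan_dim_sup_general
    {W : Type*} [NormedAddCommGroup W] [InnerProductSpace ℝ W] [FiniteDimensional ℝ W]
    (n' p k : ℕ)
    (E F : Submodule ℝ W)
    (hE : Module.finrank ℝ E = p) (hF : Module.finrank ℝ F = k)
    (e : Fin p → W) (f : Fin k → W) (θ : Fin (jordanDim n' p k) → ℝ)
    (hJ : IsJordanSystem n' p k E F e f θ) :
    Module.finrank ℝ (E ⊔ F : Submodule ℝ W)
      = max k p + Nat.card {i : Fin (jordanDim n' p k) // θ i ≠ 0} := by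
  have hsum := Submodule.finrank_sup_add_finrank_inf_eq E F
  rw [hE, hF, hJ.inf_eq_span, hJ.1.finrank_span_image] at hsum
  have hcount := Fin.card_forall_not_add_card_eq_min (fun i => θ i ≠ 0)
    ((min_le_left _ _).trans (min_le_left _ _)) ((min_le_right _ _).trans (min_le_left _ _))
  simp only [not_not] at hcount
  simp only [Set.coe_ofPred] at hsum
  omega

/-- If `(e; f; θ)` is a Jordan system for `(E, F)` and `ℓ` is the number of nonzero
Jordan angles, then `dim (E + F) = max {k, p} + ℓ`. -/
theorem jordan_dim_sup
    {W : Type*} [NormedAddCommGroup W] [InnerProductSpace ℝ W] [FiniteDimensional ℝ W]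
    (n' p k : ℕ) (hW : Module.finrank ℝ W = n')
    (E F : Submodule ℝ W)
    (hE : Module.finrank ℝ E = p) (hF : Module.finrank ℝ F = k)
    (e : Fin p → W) (f : Fin k → W) (θ : Fin (jordanDim n' p k) → ℝ)
    (hJ : IsJordanSystem n' p k E F e f θ) :
    Module.finrank ℝ (E ⊔ F : Submodule ℝ W)
      = max k p + Nat.card {i : Fin (jordanDim n' p k) // θ i ≠ 0} :=
  jordan_dim_sup_general n' p k E F hE hF e f θ hJ
end

section
/- Let W be an n-dimensional real inner product space and let E, F be subspaces of W with dim E = dim F = d. Let e_1,…,e_d and f_1,…,f_d be orthonormal bases of E and F respectively, and let e'_1,…,e'_{n−d} and f'_1,…,f'_{n−d} be orthonormal bases of E^⊥ and F^⊥ respectively. Then |det (⟨e_i, f_j⟩)_{1≤i,j≤d}| = |det (⟨e'_i, f'_j⟩)_{1≤i,j≤n−d}|. In other words, the absolute determinant of the matrix of the orthogonal projection from E onto F (in orthonormal bases) equals that of the orthogonal projection from E^⊥ onto F^⊥. -/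
/-!
Complete `e, e'` and `f, f'` to orthonormal bases `b = (e, e')` and `c = (f, f')` of `W`. The
matrix `M = (⟪b i, c j⟫)` is orthogonal, and its diagonal blocks are the two matrices of the
statement. For an orthogonal block matrix `M = [A B; C D]`, the relation `M Mᵀ = 1` gives
`M [1 Cᵀ; 0 Dᵀ] = [A 0; C 1]`, hence `det A = det M · det D` with `det M = ±1`.
-/

open Matrix

namespace Matrix

variable {R m n : Type*} [Fintype m] [Fintype n] [DecidableEq m] [DecidableEq n]

theorem det_eq_det_fromBlocks_mul_det_of_mem_orthogonalGroup [CommRing R]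
    {A : Matrix m m R} {B : Matrix m n R} {C : Matrix n m R} {D : Matrix n n R}
    (hM : fromBlocks A B C D ∈ orthogonalGroup (m ⊕ n) R) :
    A.det = (fromBlocks A B C D).det * D.det := by
  rw [mem_orthogonalGroup_iff, fromBlocks_transpose, fromBlocks_multiply, ← fromBlocks_one,
    fromBlocks_inj] at hM
  obtain ⟨-, hAC, -, hCD⟩ := hM
  have hmul : fromBlocks A B C D * fromBlocks 1 Cᵀ 0 Dᵀ = fromBlocks A 0 C 1 := by
    rw [fromBlocks_multiply, hAC, hCD]
    simp
  have := congrArg det hmul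
  rwa [det_mul, det_fromBlocks_zero₂₁, det_fromBlocks_zero₁₂, det_one, det_one, one_mul,
    mul_one, det_transpose, eq_comm] at this

theorem abs_det_of_mem_orthogonalGroup [CommRing R] [LinearOrder R] [IsStrictOrderedRing R]
    {M : Matrix m m R} (hM : M ∈ orthogonalGroup m R) : |M.det| = 1 := by
  have hdet := congrArg det ((mem_orthogonalGroup_iff m R).mp hM)
  rw [det_mul, det_transpose, det_one] at hdet
  rcases mul_self_eq_one_iff.mp hdet with h | h <;> simp [h]

theorem abs_det_eq_abs_det_of_fromBlocks_mem_orthogonalGroup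
    [CommRing R] [LinearOrder R] [IsStrictOrderedRing R]
    {A : Matrix m m R} {B : Matrix m n R} {C : Matrix n m R} {D : Matrix n n R}
    (hM : fromBlocks A B C D ∈ orthogonalGroup (m ⊕ n) R) :
    |A.det| = |D.det| := by
  rw [det_eq_det_fromBlocks_mul_det_of_mem_orthogonalGroup hM, abs_mul,
    abs_det_of_mem_orthogonalGroup hM, one_mul]

end Matrix

section OrthogonalComplement

variable {𝕜 E ι κ : Type*} [RCLike 𝕜] [NormedAddCommGroup E] [InnerProductSpace 𝕜 E]
  {u : ι → E} {v : κ → E}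

theorem Orthonormal.sumElim (hu : Orthonormal 𝕜 u) (hv : Orthonormal 𝕜 v)
    (huv : ∀ i j, inner 𝕜 (u i) (v j) = 0) : Orthonormal 𝕜 (Sum.elim u v) := by
  classical
  rw [orthonormal_iff_ite] at hu hv ⊢
  rintro (i | i) (j | j)
  · simpa using hu i j
  · simp [huv]
  · simp [inner_eq_zero_symm.mp (huv j i)]
  · simpa using hv i j

theorem Submodule.span_range_sumElim_eq_top (K : Submodule 𝕜 E) [K.HasOrthogonalProjection]
    (hu : Submodule.span 𝕜 (Set.range u) = K) (hv : Submodule.span 𝕜 (Set.range v) = Kᗮ) :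
    Submodule.span 𝕜 (Set.range (Sum.elim u v)) = ⊤ := by
  rw [Set.Sum.elim_range, Submodule.span_union, hu, hv,
    Submodule.sup_orthogonal_of_hasOrthogonalProjection]

theorem exists_orthonormalBasis_sumElim [Fintype ι] [Fintype κ] (K : Submodule 𝕜 E)
    [K.HasOrthogonalProjection]
    (hu : Orthonormal 𝕜 u) (hu_span : Submodule.span 𝕜 (Set.range u) = K)
    (hv : Orthonormal 𝕜 v) (hv_span : Submodule.span 𝕜 (Set.range v) = Kᗮ) :
    ∃ b : OrthonormalBasis (ι ⊕ κ) 𝕜 E, ⇑b = Sum.elim u v := by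
  have huK (i : ι) : u i ∈ K := hu_span ▸ Submodule.subset_span (Set.mem_range_self i)
  have hvK (j : κ) : v j ∈ Kᗮ := hv_span ▸ Submodule.subset_span (Set.mem_range_self j)
  have hon := hu.sumElim hv fun i j => Submodule.inner_right_of_mem_orthogonal (huK i) (hvK j)
  exact ⟨OrthonormalBasis.mk hon (K.span_range_sumElim_eq_top hu_span hv_span).ge,
    OrthonormalBasis.coe_mk hon _⟩

end OrthogonalComplement

theorem abs_det_proj_eq_abs_det_proj_orthComplement_general
    {W : Type*} [NormedAddCommGroup W] [InnerProductSpace ℝ W] [FiniteDimensional ℝ W]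
    (n d : ℕ)
    (E F : Submodule ℝ W)
    (e f : Fin d → W) (e' f' : Fin (n - d) → W)
    (he : Orthonormal ℝ e) (hespan : Submodule.span ℝ (Set.range e) = E)
    (hf : Orthonormal ℝ f) (hfspan : Submodule.span ℝ (Set.range f) = F)
    (he' : Orthonormal ℝ e') (he'span : Submodule.span ℝ (Set.range e') = Eᗮ)
    (hf' : Orthonormal ℝ f') (hf'span : Submodule.span ℝ (Set.range f') = Fᗮ) :
    |Matrix.det (Matrix.of fun i j => (inner ℝ (e i) (f j) : ℝ))| =
      |Matrix.det (Matrix.of fun i j => (inner ℝ (e' i) (f' j) : ℝ))| := by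
  obtain ⟨b, hb⟩ := exists_orthonormalBasis_sumElim E he hespan he' he'span
  obtain ⟨c, hc⟩ := exists_orthonormalBasis_sumElim F hf hfspan hf' hf'span
  have hblocks : b.toBasis.toMatrix c = fromBlocks
      (of fun i j => inner ℝ (e i) (f j)) (of fun i j => inner ℝ (e i) (f' j))
      (of fun i j => inner ℝ (e' i) (f j)) (of fun i j => inner ℝ (e' i) (f' j)) := by
    ext (i | i) (j | j) <;> simp [Module.Basis.toMatrix_apply, b.repr_apply_apply, hb, hc]
  have hM := b.toMatrix_orthonormalBasis_mem_orthogonal c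
  rw [hblocks] at hM
  exact abs_det_eq_abs_det_of_fromBlocks_mem_orthogonalGroup hM

/-- For subspaces `E, F` of equal dimension `d` in an `n`-dimensional real inner product
space, the absolute determinant of the matrix of inner products of orthonormal bases of
`E` and `F` equals that of orthonormal bases of `E^⊥` and `F^⊥`. -/
theorem abs_det_proj_eq_abs_det_proj_orthComplement
    {W : Type*} [NormedAddCommGroup W] [InnerProductSpace ℝ W] [FiniteDimensional ℝ W]
    (n d : ℕ) (hW : Module.finrank ℝ W = n)
    (E F : Submodule ℝ W)
    (hE : Module.finrank ℝ E = d) (hF : Module.finrank ℝ F = d)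
    (e f : Fin d → W) (e' f' : Fin (n - d) → W)
    (he : Orthonormal ℝ e) (hespan : Submodule.span ℝ (Set.range e) = E)
    (hf : Orthonormal ℝ f) (hfspan : Submodule.span ℝ (Set.range f) = F)
    (he' : Orthonormal ℝ e') (he'span : Submodule.span ℝ (Set.range e') = Eᗮ)
    (hf' : Orthonormal ℝ f') (hf'span : Submodule.span ℝ (Set.range f') = Fᗮ) :
    |Matrix.det (Matrix.of fun i j => (inner ℝ (e i) (f j) : ℝ))| =
      |Matrix.det (Matrix.of fun i j => (inner ℝ (e' i) (f' j) : ℝ))| :=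
  abs_det_proj_eq_abs_det_proj_orthComplement_general n d E F e f e' f' he hespan hf hfspan he'
    he'span hf' hf'span
end

section
/- Let p ≥ 1 and let V := ℝ^p with its standard inner product. Let 0 ≤ i, j ≤ p and let φ be a real-valued map on V^i × V^j that is multilinear in all i + j vector arguments, alternating in the first i arguments, alternating in the last j arguments, and SO(p)-invariant: φ(g v_1, …, g v_i; g w_1, …, g w_j) = φ(v_1,…,v_i; w_1,…,w_j) for every rotation g ∈ SO(p). Then there exist constants c_1, c_2 ∈ ℝ such that for all v_1,…,v_i, w_1,…,w_j ∈ V: φ(v; w) = c_1 · [i = j] · det(⟨v_a, w_b⟩)_{1≤a,b≤i} + c_2 · [i + j = p] · det(v_1, …, v_i, w_1, …, w_j), where [P] is 1 if P holds and 0 otherwise, det(⟨v_a, w_b⟩) is the determinant of the i×i Gram-type matrix of inner products (this term appears only when i = j), and det(v_1,…,v_i,w_1,…,w_j) is the determinant of the p×p matrix with these columns (this term appears only when i + j = p). In particular, if i ≠ j and i + j ≠ p, then φ = 0. -/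
/-!
A bialternating form is determined by its values `φ (e ∘ f) (e ∘ g)` on tuples of standard basis
vectors with `f`, `g` injective. Changing the signs of two coordinates `k`, `l` is a rotation; if
`k` lies in both or neither of `range f`, `range g` while `l` lies in exactly one of them, it
multiplies that value by `-1`, which therefore vanishes. So the value can only be nonzero when
`range f = range g` (forcing `i = j`) or when the two ranges partition the coordinates (forcing
`i + j = p`). In either case a permutation of the coordinates, corrected by a reflection to lie in
`SO(p)`, carries `(f, g)` to a fixed reference pair up to reordering the tuples, so the value is
`±` the value at that reference pair. The Gram determinant and the `p × p` determinant are
invariant, so subtracting suitable multiples of them from `φ` leaves an invariant form vanishing at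
both reference pairs, hence everywhere.
-/

open Module

namespace AlternatingMap

variable {R M N ι κ : Type*} [CommSemiring R] [AddCommMonoid M] [Module R M]
  [AddCommMonoid N] [Module R N]

def currySum (F : M [⋀^(ι ⊕ κ)]→ₗ[R] N) : M [⋀^ι]→ₗ[R] (M [⋀^κ]→ₗ[R] N) where
  toFun v :=
    { F.toMultilinearMap.currySum v with
      map_eq_zero_of_eq' := fun w b b' hw hb =>
        F.map_eq_zero_of_eq _ (i := .inr b) (j := .inr b') hw (by simpa using hb) }
  map_update_add' v a x y := by
    ext w
    exact congr($(F.toMultilinearMap.currySum.map_update_add v a x y) w)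
  map_update_smul' v a c x := by
    ext w
    exact congr($(F.toMultilinearMap.currySum.map_update_smul v a c x) w)
  map_eq_zero_of_eq' v a a' hv ha := by
    ext w
    exact F.map_eq_zero_of_eq _ (i := .inl a) (j := .inl a') hv (by simpa using ha)

@[simp]
theorem currySum_apply (F : M [⋀^(ι ⊕ κ)]→ₗ[R] N) (v : ι → M) (w : κ → M) :
    F.currySum v w = F (Sum.elim v w) := rfl

def mk₂ (F : (ι → M) → M [⋀^κ]→ₗ[R] N) (G : (κ → M) → M [⋀^ι]→ₗ[R] N)
    (hFG : ∀ v w, F v w = G w v) : M [⋀^ι]→ₗ[R] (M [⋀^κ]→ₗ[R] N) where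
  toFun := F
  map_update_add' v a x y := by
    ext w
    simp only [add_apply, hFG]
    exact (G w).map_update_add v a x y
  map_update_smul' v a c x := by
    ext w
    simp only [smul_apply, hFG]
    exact (G w).map_update_smul v a c x
  map_eq_zero_of_eq' v a a' hv ha := by
    ext w
    simp only [zero_apply, hFG]
    exact (G w).map_eq_zero_of_eq v hv ha

theorem map_smul_univ₂ [Fintype ι] [Fintype κ] (ψ : M [⋀^ι]→ₗ[R] (M [⋀^κ]→ₗ[R] N))
    (c : ι → R) (d : κ → R) (v : ι → M) (w : κ → M) :
    ψ (fun a => c a • v a) (fun b => d b • w b) = ((∏ a, c a) * ∏ b, d b) • ψ v w := by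
  rw [ψ.map_smul_univ, smul_apply, map_smul_univ, smul_smul]

end AlternatingMap

section Combinatorics

variable {ι κ n : Type*}

theorem Function.Injective.prod_ite_eq [Fintype ι] [DecidableEq n] {R : Type*} [CommMonoid R]
    {f : ι → n} (hf : Function.Injective f) (k : n) (c : R) :
    ∏ a, (if f a = k then c else 1) = if ∃ a, f a = k then c else 1 :=
  Fintype.prod_ite_eq_ite_exists _ (fun _ _ ha hb => hf (ha.trans hb.symm)) c

theorem Function.Injective.exists_perm_comp_eq {g g' : κ → n} (hg : Function.Injective g)
    (hg' : Function.Injective g') (h : Set.range g = Set.range g') :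
    ∃ τ : Equiv.Perm κ, ∀ b, g (τ b) = g' b :=
  ⟨(Equiv.ofInjective g' hg').trans ((Equiv.setCongr h.symm).trans (Equiv.ofInjective g hg).symm),
    fun b => by simp [Equiv.apply_ofInjective_symm hg]⟩

theorem Function.Injective.bijective_sumElim {f : ι → n} {g : κ → n}
    (hf : Function.Injective f) (hg : Function.Injective g)
    (h : ∀ x, ¬(x ∈ Set.range f ↔ x ∈ Set.range g)) : Function.Bijective (Sum.elim f g) := by
  refine ⟨hf.sumElim hg fun a b hab => h (f a) ⟨fun _ => ⟨b, hab.symm⟩, fun _ => ⟨a, rfl⟩⟩,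
    fun x => ?_⟩
  by_cases hx : x ∈ Set.range f
  · obtain ⟨a, rfl⟩ := hx
    exact ⟨.inl a, rfl⟩
  · obtain ⟨b, rfl⟩ := (not_iff.mp (h x)).mp hx
    exact ⟨.inr b, rfl⟩

end Combinatorics

theorem LinearIsometryEquiv.det_eq_one_or_neg_one {E : Type*} [NormedAddCommGroup E]
    [InnerProductSpace ℝ E] [FiniteDimensional ℝ E] (g : E ≃ₗᵢ[ℝ] E) :
    LinearMap.det (g.toLinearEquiv : E →ₗ[ℝ] E) = 1 ∨
      LinearMap.det (g.toLinearEquiv : E →ₗ[ℝ] E) = -1 := by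
  rw [← abs_eq zero_le_one, ← Real.norm_eq_abs, ← LinearMap.normDet_eq_norm_det]
  exact g.toLinearIsometry.normDet_eq_one

section Gram

variable {ι κ E : Type*} [Fintype ι] [DecidableEq ι] [NormedAddCommGroup E]
  [InnerProductSpace ℝ E]

noncomputable def gramForm (e : ι ≃ κ) : E [⋀^ι]→ₗ[ℝ] (E [⋀^κ]→ₗ[ℝ] ℝ) :=
  AlternatingMap.mk₂
    (fun v => (Matrix.detRowAlternating.compLinearMap
      (LinearMap.pi fun a => innerₗ E (v a))).domDomCongr e)
    (fun w => Matrix.detRowAlternating.compLinearMap (LinearMap.pi fun b => innerₗ E (w (e b))))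
    (fun v w => by
      change Matrix.det (Matrix.of fun b a => inner ℝ (v a) (w (e b))) =
        Matrix.det (Matrix.of fun a b => inner ℝ (w (e b)) (v a))
      rw [← Matrix.det_transpose]
      congr 1
      ext a b
      exact real_inner_comm _ _)

theorem gramForm_apply (e : ι ≃ κ) (v : ι → E) (w : κ → E) :
    gramForm e v w = Matrix.det (Matrix.of fun a b => inner ℝ (v a) (w (e b))) := by
  rw [← Matrix.det_transpose]
  rfl

end Gram

local notation "𝐞" m:max => EuclideanSpace.single (𝕜 := ℝ) m 1

def soInvariantForms (n ι κ : Type*) [Fintype n] :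
    Submodule ℝ (EuclideanSpace ℝ n [⋀^ι]→ₗ[ℝ] (EuclideanSpace ℝ n [⋀^κ]→ₗ[ℝ] ℝ)) where
  carrier := {ψ | ∀ g : EuclideanSpace ℝ n ≃ₗᵢ[ℝ] EuclideanSpace ℝ n,
    LinearMap.det (g.toLinearEquiv : EuclideanSpace ℝ n →ₗ[ℝ] EuclideanSpace ℝ n) = 1 →
    ∀ v w, ψ (fun a => g (v a)) (fun b => g (w b)) = ψ v w}
  add_mem' hψ hχ g hg v w := by simp [hψ g hg, hχ g hg]
  zero_mem' _ _ _ _ := rfl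
  smul_mem' c ψ hψ g hg v w := by simp [hψ g hg]

section Euclidean

variable {n ι κ : Type*} [Fintype n]

theorem gramForm_mem_soInvariantForms [Fintype ι] [DecidableEq ι] (e : ι ≃ κ) :
    gramForm e ∈ soInvariantForms n ι κ := fun g _ v w => by
  simp [gramForm_apply]

variable [DecidableEq n]

noncomputable def coordReflection (k : n) : EuclideanSpace ℝ n ≃ₗᵢ[ℝ] EuclideanSpace ℝ n :=
  (ℝ ∙ 𝐞 k)ᗮ.reflection

theorem coordReflection_single (k m : n) :
    coordReflection k (𝐞 m) = (if m = k then -1 else 1 : ℝ) • 𝐞 m := by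
  split_ifs with h
  · subst h
    simpa [coordReflection] using
      Submodule.reflection_orthogonalComplement_singleton_eq_neg (𝕜 := ℝ) (𝐞 m)
  · rw [one_smul]
    refine Submodule.reflection_mem_subspace_eq_self ?_
    rw [Submodule.mem_orthogonal_singleton_iff_inner_right, EuclideanSpace.inner_single_left]
    simp [h]

theorem det_coordReflection (k : n) :
    LinearMap.det ((coordReflection k).toLinearEquiv :
      EuclideanSpace ℝ n →ₗ[ℝ] EuclideanSpace ℝ n) = -1 := by
  have hrank : finrank ℝ (ℝ ∙ 𝐞 k)ᗮᗮ = 1 := by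
    rw [Submodule.orthogonal_orthogonal, finrank_span_singleton]
    simp
  have h := Submodule.det_reflection (ℝ ∙ 𝐞 k)ᗮ
  rw [hrank, pow_one] at h
  exact h

noncomputable def detForm (σ : n ≃ ι ⊕ κ) :
    EuclideanSpace ℝ n [⋀^ι]→ₗ[ℝ] (EuclideanSpace ℝ n [⋀^κ]→ₗ[ℝ] ℝ) :=
  ((EuclideanSpace.basisFun n ℝ).toBasis.det.domDomCongr σ).currySum

theorem detForm_apply (σ : n ≃ ι ⊕ κ) (v : ι → EuclideanSpace ℝ n)
    (w : κ → EuclideanSpace ℝ n) :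
    detForm σ v w = Matrix.det (Matrix.of fun r c => Sum.elim v w (σ c) r) := by
  simp [detForm, Module.Basis.det_apply]
  rfl

theorem detForm_mem_soInvariantForms (σ : n ≃ ι ⊕ κ) :
    detForm σ ∈ soInvariantForms n ι κ := fun g hg v w => by
  simp only [detForm, AlternatingMap.currySum_apply, AlternatingMap.domDomCongr_apply]
  rw [← Function.comp_def g v, ← Function.comp_def g w, ← Sum.comp_elim, Function.comp_assoc]
  have h := (EuclideanSpace.basisFun n ℝ).toBasis.det_comp
    (g.toLinearEquiv : EuclideanSpace ℝ n →ₗ[ℝ] _) (Sum.elim v w ∘ σ)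
  rw [hg, one_mul] at h
  simpa using h

variable [Fintype ι] [Fintype κ]

/-- An isometry of determinant `-1` becomes a rotation after composing with a coordinate
reflection, which only changes the signs of basis vectors. -/
theorem abs_apply_isometry_single [Nonempty n] {ψ} (hψ : ψ ∈ soInvariantForms n ι κ)
    (g : EuclideanSpace ℝ n ≃ₗᵢ[ℝ] EuclideanSpace ℝ n) (f : ι → n) (f' : κ → n) :
    |ψ (fun a => g (𝐞 (f a))) (fun b => g (𝐞 (f' b)))| =
      |ψ (fun a => 𝐞 (f a)) (fun b => 𝐞 (f' b))| := by
  rcases g.det_eq_one_or_neg_one with hg | hg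
  · rw [hψ g hg]
  obtain ⟨k⟩ := ‹Nonempty n›
  have hdet : LinearMap.det ((coordReflection k).trans g).toLinearEquiv.toLinearMap = 1 := by
    rw [LinearIsometryEquiv.toLinearEquiv_trans, LinearEquiv.coe_trans, LinearMap.det_comp, hg,
      det_coordReflection]
    norm_num
  rw [← hψ _ hdet (fun a => 𝐞 (f a))]
  simp only [LinearIsometryEquiv.trans_apply, coordReflection_single, map_smul,
    AlternatingMap.map_smul_univ₂, smul_eq_mul, abs_mul, Finset.abs_prod]
  simp [apply_ite]

theorem abs_apply_perm_single [Nonempty n] {ψ} (hψ : ψ ∈ soInvariantForms n ι κ)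
    (π : Equiv.Perm n) (f : ι → n) (f' : κ → n) :
    |ψ (fun a => 𝐞 (π (f a))) (fun b => 𝐞 (π (f' b)))| =
      |ψ (fun a => 𝐞 (f a)) (fun b => 𝐞 (f' b))| := by
  simpa [EuclideanSpace.piLpCongrLeft_single] using
    abs_apply_isometry_single hψ (LinearIsometryEquiv.piLpCongrLeft 2 ℝ ℝ π) f f'

/-- Reflecting in the coordinates `k` and `l` is a rotation that multiplies the value by `-1`. -/
theorem apply_single_eq_zero_of_mem_range_iff {ψ} (hψ : ψ ∈ soInvariantForms n ι κ)
    {f : ι → n} {g : κ → n} (hf : Function.Injective f) (hg : Function.Injective g) {k l : n}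
    (hk : k ∈ Set.range f ↔ k ∈ Set.range g) (hl : ¬(l ∈ Set.range f ↔ l ∈ Set.range g)) :
    ψ (fun a => 𝐞 (f a)) (fun b => 𝐞 (g b)) = 0 := by
  have hdet :
      LinearMap.det ((coordReflection l).trans (coordReflection k)).toLinearEquiv.toLinearMap
        = 1 := by
    rw [LinearIsometryEquiv.toLinearEquiv_trans, LinearEquiv.coe_trans, LinearMap.det_comp,
      det_coordReflection, det_coordReflection]
    norm_num
  have h := hψ _ hdet (fun a => 𝐞 (f a)) (fun b => 𝐞 (g b))
  simp only [LinearIsometryEquiv.trans_apply, coordReflection_single, map_smul, smul_smul,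
    AlternatingMap.map_smul_univ₂, smul_eq_mul, Finset.prod_mul_distrib,
    hf.prod_ite_eq, hg.prod_ite_eq] at h
  simp only [Set.mem_range] at hk hl
  split_ifs at h <;> first | tauto | linarith

theorem abs_apply_single_eq_of_bijective [Nonempty n] {ψ} (hψ : ψ ∈ soInvariantForms n ι κ)
    {f f' : ι → n} {g g' : κ → n} (h : Function.Bijective (Sum.elim f g))
    (h' : Function.Bijective (Sum.elim f' g')) :
    |ψ (fun a => 𝐞 (f a)) (fun b => 𝐞 (g b))| =
      |ψ (fun a => 𝐞 (f' a)) (fun b => 𝐞 (g' b))| := by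
  set π := (Equiv.ofBijective _ h).symm.trans (Equiv.ofBijective _ h')
  have hπ (x : ι ⊕ κ) : π (Sum.elim f g x) = Sum.elim f' g' x := by
    simp [π, Equiv.ofBijective_symm_apply_apply]
  have hπf (a : ι) : π (f a) = f' a := hπ (.inl a)
  have hπg (b : κ) : π (g b) = g' b := hπ (.inr b)
  rw [← abs_apply_perm_single hψ π]
  simp only [hπf, hπg]

theorem abs_apply_single_eq_of_range_eq [Nonempty n] {ψ} (hψ : ψ ∈ soInvariantForms n ι κ)
    {f f' : ι → n} {g g' : κ → n} (hf : Function.Injective f) (hf' : Function.Injective f')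
    (hg : Function.Injective g) (hg' : Function.Injective g')
    (h : Set.range f = Set.range g) (h' : Set.range f' = Set.range g') :
    |ψ (fun a => 𝐞 (f a)) (fun b => 𝐞 (g b))| =
      |ψ (fun a => 𝐞 (f' a)) (fun b => 𝐞 (g' b))| := by
  classical
  obtain ⟨π, hπ⟩ := Equiv.Perm.exists_extending_pair f f' hf hf'
  have hrange : Set.range (π ∘ g) = Set.range g' := by
    rw [Set.range_comp, ← h, ← Set.range_comp, ← h']
    exact congrArg Set.range (funext hπ)
  obtain ⟨τ, hτ⟩ := (π.injective.comp hg).exists_perm_comp_eq hg' hrange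
  rw [← abs_apply_perm_single hψ π]
  simp only [hπ, ← hτ, Function.comp_apply]
  have hperm := (ψ fun a => 𝐞 (f' a)).map_perm (fun b => 𝐞 (π (g b))) τ
  rw [Function.comp_def] at hperm
  rw [hperm]
  rcases Int.units_eq_one_or (Equiv.Perm.sign τ) with hs | hs <;> simp [hs]

end Euclidean

section Fin

/-- The term `[i = j] · det (⟪v a, w b⟫)` of the classification. -/
noncomputable def gramTerm (p i j : ℕ) :
    EuclideanSpace ℝ (Fin p) [⋀^Fin i]→ₗ[ℝ] (EuclideanSpace ℝ (Fin p) [⋀^Fin j]→ₗ[ℝ] ℝ) :=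
  if h : i = j then gramForm (finCongr h) else 0

/-- The term `[i + j = p] · det (v_1, …, v_i, w_1, …, w_j)` of the classification. -/
noncomputable def detTerm (p i j : ℕ) :
    EuclideanSpace ℝ (Fin p) [⋀^Fin i]→ₗ[ℝ] (EuclideanSpace ℝ (Fin p) [⋀^Fin j]→ₗ[ℝ] ℝ) :=
  if h : i + j = p then detForm (finSumFinEquiv.trans (finCongr h)).symm else 0

variable {p i j : ℕ}

theorem gramTerm_apply (v : Fin i → EuclideanSpace ℝ (Fin p))
    (w : Fin j → EuclideanSpace ℝ (Fin p)) :
    gramTerm p i j v w = if h : i = j then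
      Matrix.det (Matrix.of fun a b => (inner ℝ (v a) (w (Fin.cast h b)) : ℝ)) else 0 := by
  unfold gramTerm
  split_ifs <;> simp [gramForm_apply]

theorem detTerm_apply (v : Fin i → EuclideanSpace ℝ (Fin p))
    (w : Fin j → EuclideanSpace ℝ (Fin p)) :
    detTerm p i j v w = if h : i + j = p then
      Matrix.det (Matrix.of fun (r : Fin p) (c : Fin p) =>
        if hc : (c : ℕ) < i then v ⟨(c : ℕ), hc⟩ r
        else w ⟨(c : ℕ) - i, Nat.sub_lt_left_of_lt_add (not_lt.mp hc) (h ▸ c.isLt)⟩ r)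
      else 0 := by
  unfold detTerm
  split_ifs with h
  · rw [detForm_apply]
    congr 1
    ext r c
    subst h
    induction c using Fin.addCases <;> simp
  · rfl

theorem gramTerm_mem_soInvariantForms :
    gramTerm p i j ∈ soInvariantForms (Fin p) (Fin i) (Fin j) := by
  unfold gramTerm
  split_ifs
  exacts [gramForm_mem_soInvariantForms _, zero_mem _]

theorem detTerm_mem_soInvariantForms :
    detTerm p i j ∈ soInvariantForms (Fin p) (Fin i) (Fin j) := by
  unfold detTerm
  split_ifs
  exacts [detForm_mem_soInvariantForms _, zero_mem _]

theorem gramTerm_apply_castLE_castLE (hi : i ≤ p) (hj : j ≤ p) (h : i = j) :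
    gramTerm p i j (fun a => 𝐞 (Fin.castLE hi a)) (fun b => 𝐞 (Fin.castLE hj b)) = 1 := by
  subst h
  rw [gramTerm_apply, dif_pos rfl]
  refine (congrArg Matrix.det ?_).trans Matrix.det_one
  ext a b
  simp [EuclideanSpace.inner_single_left, Matrix.one_apply, Fin.ext_iff]

theorem detTerm_apply_castLE_castLE (hp : 1 ≤ p) (hi : i ≤ p) (hj : j ≤ p) (h : i = j) :
    detTerm p i j (fun a => 𝐞 (Fin.castLE hi a)) (fun b => 𝐞 (Fin.castLE hj b)) = 0 := by
  rw [detTerm]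
  split_ifs
  · rw [detForm, AlternatingMap.currySum_apply]
    exact AlternatingMap.map_eq_zero_of_eq _ _ (i := Sum.inl ⟨0, by omega⟩)
      (j := Sum.inr ⟨0, by omega⟩) rfl Sum.inl_ne_inr
  · rfl

theorem gramTerm_apply_castLE_natAdd (hp : 1 ≤ p) (hi : i ≤ p) (h : i + j = p) :
    gramTerm p i j (fun a => 𝐞 (Fin.castLE hi a)) (fun b => 𝐞 (Fin.cast h (Fin.natAdd i b)))
      = 0 := by
  rw [gramTerm_apply]
  split_ifs
  · refine Matrix.det_eq_zero_of_row_eq_zero ⟨0, by omega⟩ fun b => ?_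
    simp [EuclideanSpace.inner_single_left, Fin.ext_iff]
    omega
  · rfl

theorem detTerm_apply_castLE_natAdd (hi : i ≤ p) (h : i + j = p) :
    detTerm p i j (fun a => 𝐞 (Fin.castLE hi a)) (fun b => 𝐞 (Fin.cast h (Fin.natAdd i b)))
      = 1 := by
  rw [detTerm, dif_pos h, detForm_apply]
  refine (congrArg Matrix.det ?_).trans Matrix.det_one
  ext r c
  subst h
  induction c using Fin.addCases <;>
    simp [Matrix.one_apply, Fin.ext_iff]

theorem eq_zero_of_mem_soInvariantForms
    {ψ : EuclideanSpace ℝ (Fin p) [⋀^Fin i]→ₗ[ℝ] (EuclideanSpace ℝ (Fin p) [⋀^Fin j]→ₗ[ℝ] ℝ)}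
    (hψ : ψ ∈ soInvariantForms (Fin p) (Fin i) (Fin j)) (hp : 1 ≤ p) (hi : i ≤ p) (hj : j ≤ p)
    (h₁ : i = j → ψ (fun a => 𝐞 (Fin.castLE hi a)) (fun b => 𝐞 (Fin.castLE hj b)) = 0)
    (h₂ : ∀ h : i + j = p,
      ψ (fun a => 𝐞 (Fin.castLE hi a)) (fun b => 𝐞 (Fin.cast h (Fin.natAdd i b))) = 0) :
    ψ = 0 := by
  have : Nonempty (Fin p) := ⟨⟨0, hp⟩⟩
  refine (EuclideanSpace.basisFun _ ℝ).toBasis.ext_alternating fun f hf => ?_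
  refine (EuclideanSpace.basisFun _ ℝ).toBasis.ext_alternating fun g hg => ?_
  simp only [OrthonormalBasis.coe_toBasis, EuclideanSpace.basisFun_apply,
    AlternatingMap.zero_apply]
  by_cases hsame : ∀ x, (x ∈ Set.range f ↔ x ∈ Set.range g)
  · have hfg : Set.range f = Set.range g := Set.ext hsame
    have hij : i = j := by
      simpa using Fintype.card_congr ((Equiv.ofInjective f hf).trans
        ((Equiv.setCongr hfg).trans (Equiv.ofInjective g hg).symm))
    subst hij
    rw [← abs_eq_zero, abs_apply_single_eq_of_range_eq hψ hf (Fin.castLE_injective hi) hg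
      (Fin.castLE_injective hj) hfg rfl, abs_eq_zero, h₁ rfl]
  by_cases hcompl : ∀ x, ¬(x ∈ Set.range f ↔ x ∈ Set.range g)
  · have hbij := hf.bijective_sumElim hg hcompl
    have h : i + j = p := by simpa using Fintype.card_of_bijective hbij
    have hbij₀ : Function.Bijective
        (Sum.elim (Fin.castLE hi) fun b : Fin j => Fin.cast h (Fin.natAdd i b)) := by
      convert (finSumFinEquiv.trans (finCongr h)).bijective
      ext (a | b) <;> rfl
    rw [← abs_eq_zero, abs_apply_single_eq_of_bijective hψ hbij hbij₀, abs_eq_zero, h₂ h]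
  obtain ⟨l, hl⟩ := not_forall.mp hsame
  obtain ⟨k, hk⟩ := not_forall_not.mp hcompl
  exact apply_single_eq_zero_of_mem_range_iff hψ hf hg hk hl

end Fin

/-- Classification of `SO(p)`-invariant elements of `Λ^i (ℝ^p)^* ⊗ Λ^j (ℝ^p)^*`: every
real-valued map on `(ℝ^p)^i × (ℝ^p)^j` that is multilinear, alternating in the first `i`
and in the last `j` arguments, and invariant under the diagonal action of `SO(p)` is a
linear combination of the Gram determinant `det (⟪v_a, w_b⟫)` (present only if `i = j`)
and the `p × p` determinant `det (v_1, …, v_i, w_1, …, w_j)` (present only if `i + j = p`).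
In particular, if `i ≠ j` and `i + j ≠ p`, the map vanishes. -/
theorem so_invariant_bialternating_forms (p : ℕ) (hp : 1 ≤ p)
    (i j : ℕ) (hi : i ≤ p) (hj : j ≤ p)
    (φ : (EuclideanSpace ℝ (Fin p)) [⋀^Fin i]→ₗ[ℝ]
          ((EuclideanSpace ℝ (Fin p)) [⋀^Fin j]→ₗ[ℝ] ℝ))
    (hinv : ∀ g : EuclideanSpace ℝ (Fin p) ≃ₗᵢ[ℝ] EuclideanSpace ℝ (Fin p),
      LinearMap.det (g.toLinearEquiv :
        EuclideanSpace ℝ (Fin p) →ₗ[ℝ] EuclideanSpace ℝ (Fin p)) = 1 →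
      ∀ (v : Fin i → EuclideanSpace ℝ (Fin p)) (w : Fin j → EuclideanSpace ℝ (Fin p)),
        φ (fun a => g (v a)) (fun b => g (w b)) = φ v w) :
    ∃ c₁ c₂ : ℝ,
      ∀ (v : Fin i → EuclideanSpace ℝ (Fin p)) (w : Fin j → EuclideanSpace ℝ (Fin p)),
        φ v w =
          c₁ * (if h : i = j then
              Matrix.det (Matrix.of fun a b =>
                (inner ℝ (v a) (w (Fin.cast h b)) : ℝ)) else 0) +
          c₂ * (if h : i + j = p then
              Matrix.det (Matrix.of fun (r : Fin p) (c : Fin p) =>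
                if hc : (c : ℕ) < i then v ⟨(c : ℕ), hc⟩ r
                else w ⟨(c : ℕ) - i, by have := c.isLt; omega⟩ r) else 0) := by
  set c₁ := φ (fun a => 𝐞 (Fin.castLE hi a)) (fun b => 𝐞 (Fin.castLE hj b))
  set c₂ := if h : i + j = p then
    φ (fun a => 𝐞 (Fin.castLE hi a)) (fun b => 𝐞 (Fin.cast h (Fin.natAdd i b))) else 0
  have hinv' : φ ∈ soInvariantForms (Fin p) (Fin i) (Fin j) := hinv
  have hψ : φ + ((-c₁) • gramTerm p i j + (-c₂) • detTerm p i j) = 0 := by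
    refine eq_zero_of_mem_soInvariantForms (add_mem hinv' (add_mem
      (Submodule.smul_mem _ _ gramTerm_mem_soInvariantForms)
      (Submodule.smul_mem _ _ detTerm_mem_soInvariantForms))) hp hi hj (fun hij => ?_) (fun h => ?_)
    · simp [gramTerm_apply_castLE_castLE hi hj hij, detTerm_apply_castLE_castLE hp hi hj hij, c₁]
    · simp [gramTerm_apply_castLE_natAdd hp hi h, detTerm_apply_castLE_natAdd hi h, c₂, h]
  refine ⟨c₁, c₂, fun v w => ?_⟩
  have hvw := congr($hψ v w)
  simp only [AlternatingMap.add_apply, AlternatingMap.smul_apply, AlternatingMap.zero_apply,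
    smul_eq_mul, gramTerm_apply, detTerm_apply] at hvw
  linarith
end
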